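/- arXiv:2204.02391 — 7 statements merged into one kernel-verified Lean document; each statement's English description precedes it below -/
import Mathlib

section
/- For positive integers m, n ≥ 3 with gcd(m,n) = 1 and n odd, let a(i,j) be the unique integer in [1, mn] congruent to i mod m and j mod n, and suppose a(-2,0) < a(0,-2). Then n - 2 - 2·⌊a(-2,0)/m⌋ = a(0,-4)/m, i.e., m divides a(0,-4) and the identity holds. -/
/-!
Write a(-2,0) = m q - 2. The residues a(-2,0) and a(0,-2) are determined by their congruences
inside [1, mn], so a(0,-2) = mn - 2 - a(-2,0); the hypothesis a(-2,0) < a(0,-2) then gives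
2q ≤ n, hence 2q < n as n is odd. So m (n - 2q) = mn - 2 (a(-2,0) + 2) lies in [1, mn] and has the
residues of a(0,-4), which makes it a(0,-4), while ⌊a(-2,0)/m⌋ = q - 1.
-/

namespace Int

theorem ModEq.eq_of_mem_Icc {k x y : ℤ} (h : x ≡ y [ZMOD k]) (hx : x ∈ Set.Icc 1 k)
    (hy : y ∈ Set.Icc 1 k) : x = y := by
  have hlt : |y - x| < k := abs_sub_lt_iff.2 ⟨by linarith [hx.1, hy.2], by linarith [hx.2, hy.1]⟩
  linarith [eq_zero_of_abs_lt_dvd h.dvd hlt]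

theorem ModEq.eq_of_isCoprime {m n x y : ℤ} (hmn : IsCoprime m n) (hm : x ≡ y [ZMOD m])
    (hn : x ≡ y [ZMOD n]) (hx : x ∈ Set.Icc 1 (m * n)) (hy : y ∈ Set.Icc 1 (m * n)) : x = y :=
  ModEq.eq_of_mem_Icc (modEq_iff_dvd.2 (hmn.mul_dvd hm.dvd hn.dvd)) hx hy

theorem le_sub_one_mul_of_dvd_of_lt {m n a : ℤ} (hn : 0 < n) (hdvd : n ∣ a) (ha : a < m * n) :
    a ≤ (m - 1) * n := by
  obtain ⟨j, rfl⟩ := hdvd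
  have : j < m := lt_of_mul_lt_mul_right (by linarith) hn.le
  nlinarith

theorem floor_intCast_div_intCast {a b : ℤ} (hb : 0 ≤ b) : ⌊(a : ℚ) / b⌋ = a / b := by
  lift b to ℕ using hb
  exact_mod_cast Rat.floor_intCast_div_natCast a b

end Int

/-- For coprime `m, n ≥ 3` with `n` odd and `a(-2,0) < a(0,-2)`:
`m ∣ a(0,-4)` and `n - 2 - 2·⌊a(-2,0)/m⌋ = a(0,-4)/m`. -/
theorem stmt_9 (m n : ℤ) (hm : 3 ≤ m) (hn : 3 ≤ n) (hmn : IsCoprime m n)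
    (hodd : Odd n)
    (a20 a02 a04 : ℤ)
    (h1 : a20 ≡ -2 [ZMOD m]) (h2 : a20 ≡ 0 [ZMOD n])
    (h3 : 1 ≤ a20) (h4 : a20 ≤ m * n)
    (h5 : a02 ≡ 0 [ZMOD m]) (h6 : a02 ≡ -2 [ZMOD n])
    (h7 : 1 ≤ a02) (h8 : a02 ≤ m * n)
    (h9 : a04 ≡ 0 [ZMOD m]) (h10 : a04 ≡ -4 [ZMOD n])
    (h11 : 1 ≤ a04) (h12 : a04 ≤ m * n)
    (hlt : a20 < a02) :
    m ∣ a04 ∧ n - 2 - 2 * ⌊(a20 : ℚ) / (m : ℚ)⌋ = a04 / m := by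
  obtain ⟨q, hq⟩ : m ∣ a20 + 2 := by simpa using h1.symm.dvd
  obtain ⟨p, hp⟩ : n ∣ a20 := by simpa using h2.symm.dvd
  have hq1 : 1 ≤ q := by nlinarith
  have ha20 : a20 ≤ (m - 1) * n := by
    refine Int.le_sub_one_mul_of_dvd_of_lt (by omega) ⟨p, hp⟩ (h4.lt_of_ne ?_)
    intro h
    have : m ∣ 2 := ⟨q - n, by linear_combination hq - h⟩
    have := Int.le_of_dvd two_pos this
    omega
  have ha02 : a02 = m * n - 2 - a20 := by
    refine Int.ModEq.eq_of_isCoprime hmn ?_ ?_ ⟨h7, h8⟩ ⟨by nlinarith, by linarith⟩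
    · exact h5.trans (Int.modEq_iff_dvd.2 ⟨n - q, by linear_combination -hq⟩)
    · exact h6.trans (Int.modEq_iff_dvd.2 ⟨m - p, by linear_combination -hp⟩)
  have h2q : 2 * q < n := by
    have : 2 * q ≤ n := by nlinarith
    obtain ⟨r, rfl⟩ := hodd
    omega
  have ha04 : a04 = m * (n - 2 * q) := by
    refine Int.ModEq.eq_of_isCoprime hmn ?_ ?_ ⟨h11, h12⟩ ⟨by nlinarith, by nlinarith⟩
    · exact h9.trans (Int.modEq_zero_iff_dvd.2 (dvd_mul_right m _)).symm
    · exact h10.trans (Int.modEq_iff_dvd.2 ⟨m - 2 * p, by linear_combination 2 * hq - 2 * hp⟩)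
  have hfloor : a20 / m = q - 1 := by
    rw [show a20 = m - 2 + m * (q - 1) by linear_combination hq,
      Int.add_mul_ediv_left _ _ (by omega), Int.ediv_eq_zero_of_lt (by omega) (by omega), zero_add]
  refine ⟨⟨_, ha04⟩, ?_⟩
  rw [Int.floor_intCast_div_intCast (by omega), hfloor, ha04, Int.mul_ediv_cancel_left _ (by omega)]
  ring
end

section
/- Let m, n ≥ 3 be integers with gcd(m,n) = 2, and let a(i,j) denote the unique integer in [1, lcm(m,n)] congruent to i mod m and j mod n (which exists when i ≡ j mod 2). If a(0,-2) < a(-2,0), then, setting x = 2·a(0,-2) and y = mn - 4 - x, the integers x/m and y/n are both even, hence gcd(x/m, y/n) ≠ 1. -/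
/-- For `m, n ≥ 3` with `gcd(m,n) = 2`, using `a(i,j)` the unique integer in
`[1, lcm(m,n)]` with the indicated residues: if `a(0,-2) < a(-2,0)` then, setting
`x = 2·a(0,-2)` and `y = mn - 4 - x`, the integers `x/m` and `y/n` are both even,
hence `gcd(x/m, y/n) ≠ 1`. -/
theorem stmt_10 (m n : ℤ) (hm : 3 ≤ m) (hn : 3 ≤ n) (hg : Int.gcd m n = 2)
    (a02 a20 : ℤ)
    (h1 : a02 ≡ 0 [ZMOD m]) (h2 : a02 ≡ -2 [ZMOD n])
    (h3 : 1 ≤ a02) (h4 : a02 ≤ Int.lcm m n)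
    (h5 : a20 ≡ -2 [ZMOD m]) (h6 : a20 ≡ 0 [ZMOD n])
    (h7 : 1 ≤ a20) (h8 : a20 ≤ Int.lcm m n)
    (hlt : a02 < a20) :
    m ∣ 2 * a02 ∧ n ∣ (m * n - 4 - 2 * a02) ∧
      Even ((2 * a02) / m) ∧ Even ((m * n - 4 - 2 * a02) / n) ∧
      Int.gcd ((2 * a02) / m) ((m * n - 4 - 2 * a02) / n) ≠ 1 := by
  have hm0 : m ≠ 0 := by omega
  have hn0 : n ≠ 0 := by omega
  have h2m : (2:ℤ) ∣ m := by
    have := @Int.gcd_dvd_left m n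
    rw [hg] at this
    exact_mod_cast this
  obtain ⟨m', hm'⟩ := h2m
  have htd : m ∣ a02 := by
    have := h1.dvd
    simpa using this.neg_right
  obtain ⟨t, ht⟩ := htd
  have hsd : n ∣ a02 + 2 := by
    have := h2.dvd
    have : n ∣ -(-2 - a02) := this.neg_right
    simpa [neg_sub] using this
  obtain ⟨s, hs⟩ := hsd
  have hx : (2 * a02) / m = 2 * t := by
    rw [ht, show 2 * (m * t) = m * (2 * t) by ring, Int.mul_ediv_cancel_left _ hm0]
  have hyeq : m * n - 4 - 2 * a02 = n * (m - 2 * s) := by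
    have ha : a02 = n * s - 2 := by omega
    rw [ha]; ring
  have hy : (m * n - 4 - 2 * a02) / n = m - 2 * s := by
    rw [hyeq, Int.mul_ediv_cancel_left _ hn0]
  refine ⟨⟨2 * t, by rw [ht]; ring⟩, ⟨m - 2 * s, hyeq⟩, ?_, ?_, ?_⟩
  · rw [hx]; exact ⟨t, by ring⟩
  · rw [hy]; exact ⟨m' - s, by omega⟩
  · rw [hx, hy]
    intro hc
    have h2dvd : (2:ℤ) ∣ (Int.gcd (2 * t) (m - 2 * s) : ℤ) :=
      Int.dvd_coe_gcd ⟨t, by ring⟩ ⟨m' - s, by omega⟩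
    rw [hc] at h2dvd
    norm_num at h2dvd
end

section
/- In the Cartesian product digraph C⃗_m □ C⃗_n of two directed cycles with m, n ≥ 2, identified with the abelian group Z_m × Z_n where each vertex v has out-neighbors v+(1,0) and v+(0,1): for every nonidentity subgroup coset structure, every coset of the subgroup generated by (1,-1) intersects the rectangle R = {0,1} × {0,1} whenever the digraph obtained by deleting R admits a vertex-disjoint cycle cover. Equivalently: if H is a spanning subdigraph of (C⃗_m □ C⃗_n) ∖ R in which every vertex has in-degree and out-degree 1, then every coset of ⟨(1,-1)⟩ in Z_m × Z_n contains an element of R. -/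
/-!
Let `N = ⟨(1,-1)⟩` and let `π : ℤ_m × ℤ_n → Q = (ℤ_m × ℤ_n) ⧸ N` be the quotient map, so the
fibres of `π` are the cosets of `N`. Since `(0,1) ≡ (1,0) mod N`, every edge of the digraph
raises `π` by `e = π(1,0)`, and `e` generates `Q`. The cycle cover restricts to a bijection from
`π⁻¹(q) ∖ R` onto `π⁻¹(q + e) ∖ R`, and translation by `(1,0)` is a bijection
`π⁻¹(q) → π⁻¹(q + e)`; hence `|π⁻¹(q) ∩ R|` does not depend on `q`. It is positive at
`q = π(0,0)`, so every coset of `N` meets `R`.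
-/

open Finset

theorem Finset.card_eq_of_biUnique {α β : Type*} {s : Finset α} {t : Finset β}
    (r : α → β → Prop) (hs : ∀ a ∈ s, ∃ b ∈ t, r a b) (ht : ∀ b ∈ t, ∃ a ∈ s, r a b)
    (hl : ∀ a a' b, r a b → r a' b → a = a') (hr : ∀ a b b', r a b → r a b' → b = b') :
    #s = #t :=
  le_antisymm
    (card_le_card_of_forall_subsingleton r hs fun _ _ _ ha _ ha' => hl _ _ _ ha.2 ha'.2)
    (card_le_card_of_forall_subsingleton' r ht fun _ _ _ hb _ hb' => hr _ _ _ hb.2 hb'.2)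

theorem Function.apply_nsmul_eq_apply_zero {Q β : Type*} [AddMonoid Q] {c : Q → β} {e : Q}
    (hc : ∀ q, c (q + e) = c q) (k : ℕ) : c (k • e) = c 0 := by
  induction k with
  | zero => rw [zero_smul]
  | succ k ih => rw [succ_nsmul, hc, ih]

theorem AddMonoidHom.card_fiber_add {G Q : Type*} [AddGroup G] [Fintype G] [AddGroup Q]
    [DecidableEq Q] (f : G →+ Q) (g : G) (q : Q) :
    #{x | f x = q} = #{x | f x = q + f g} := by
  refine card_eq_of_biUnique (fun x y => y = x + g) (fun x hx => ⟨x + g, ?_, rfl⟩)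
    (fun y hy => ⟨y - g, ?_, (sub_add_cancel y g).symm⟩)
    (fun _ _ _ h h' => add_right_cancel (h.symm.trans h')) (fun _ _ _ h h' => h.trans h'.symm)
  · simp_all
  · simp_all

structure IsCycleCover {α : Type*} (H : α → α → Prop) (S : Set α) : Prop where
  mem_of_adj {u v : α} : H u v → u ∈ S ∧ v ∈ S
  existsUnique_out : ∀ u ∈ S, ∃! v, H u v
  existsUnique_in : ∀ v ∈ S, ∃! u, H u v

namespace IsCycleCover

variable {α Q : Type*} [Fintype α] [AddGroup Q] [DecidableEq Q] {H : α → α → Prop}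

theorem card_filter_add {S : Set α} [DecidablePred (· ∈ S)] (hH : IsCycleCover H S)
    {f : α → Q} {e : Q} (hf : ∀ u v, H u v → f v = f u + e) (q : Q) :
    #{x | x ∈ S ∧ f x = q} = #{x | x ∈ S ∧ f x = q + e} := by
  refine card_eq_of_biUnique H (fun u hu => ?_) (fun v hv => ?_)
    (fun u u' v h h' => (hH.existsUnique_in v (hH.mem_of_adj h).2).unique h h')
    (fun u v v' h h' => (hH.existsUnique_out u (hH.mem_of_adj h).1).unique h h')
  · simp only [mem_filter, mem_univ, true_and] at hu
    obtain ⟨v, hv, -⟩ := hH.existsUnique_out u hu.1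
    exact ⟨v, by simp [(hH.mem_of_adj hv).2, hf u v hv, hu.2], hv⟩
  · simp only [mem_filter, mem_univ, true_and] at hv
    obtain ⟨u, hu, -⟩ := hH.existsUnique_in v hv.1
    refine ⟨u, ?_, hu⟩
    have hfu : f u + e = q + e := (hf u v hu).symm.trans hv.2
    simp [(hH.mem_of_adj hu).1, add_right_cancel hfu]

theorem exists_mem_fiber {R : Set α} [DecidablePred (· ∈ R)] (hH : IsCycleCover H Rᶜ)
    {f : α → Q} {e : Q} (hf : ∀ u v, H u v → f v = f u + e)
    (hfib : ∀ q, #{x | f x = q} = #{x | f x = q + e}) (hgen : ∀ q, ∃ k : ℕ, q = k • e)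
    {r : α} (hr : r ∈ R) (q : Q) : ∃ x ∈ R, f x = q := by
  set c : Q → ℕ := fun q => #{x | x ∈ R ∧ f x = q}
  have hsplit : ∀ q, c q + #{x | x ∈ Rᶜ ∧ f x = q} = #{x | f x = q} := fun q => by
    rw [← card_filter_add_card_filter_not (s := filter (f · = q) univ) (· ∈ R)]
    simp only [c, filter_filter, Set.mem_compl_iff, and_comm]
  have hc : ∀ q, c (q + e) = c q := fun q => by
    have := hsplit q
    have := hsplit (q + e)
    have := hH.card_filter_add hf q
    have := hfib q
    omega
  have hconst : ∀ q, c q = c 0 := fun q => by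
    obtain ⟨k, rfl⟩ := hgen q
    exact Function.apply_nsmul_eq_apply_zero hc k
  have hpos : 0 < c q := by
    rw [hconst, ← hconst (f r)]
    exact card_pos.2 ⟨r, by simp [hr]⟩
  obtain ⟨x, hx⟩ := card_pos.1 hpos
  exact ⟨x, by simpa using hx⟩

end IsCycleCover

section Torus

variable {m n : ℕ}

local notation "π" => QuotientAddGroup.mk' (AddSubgroup.zmultiples ((1 : ZMod m), (-1 : ZMod n)))

theorem mk'_zmultiples_add_zero_one (u : ZMod m × ZMod n) : π (u + (0, 1)) = π (u + (1, 0)) := by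
  refine QuotientAddGroup.eq_iff_sub_mem.2 (AddSubgroup.mem_zmultiples_iff.2 ⟨-1, ?_⟩)
  ext <;> simp

theorem mk'_zmultiples_eq_nsmul [NeZero m] [NeZero n] (x : ZMod m × ZMod n) :
    π x = (x.1.val + x.2.val) • π (1, 0) := by
  have hx : x = x.1.val • ((1 : ZMod m), (0 : ZMod n)) + x.2.val • (0, 1) := by
    ext <;> simp
  have h01 := mk'_zmultiples_add_zero_one (m := m) (n := n) 0
  rw [zero_add, zero_add] at h01
  conv_lhs => rw [hx, map_add, map_nsmul, map_nsmul, h01]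
  rw [add_nsmul]

end Torus

/-- If `H` is a vertex-disjoint cycle cover of `(C⃗_m □ C⃗_n) ∖ R_{2,2}` (every
vertex outside `R = {0,1} × {0,1}` has in-degree and out-degree 1, and edges go
from `u` to `u+(1,0)` or `u+(0,1)`), then every coset of the subgroup generated
by `(1,-1)` in `ZMod m × ZMod n` contains an element of `R`. -/
theorem stmt_13 (m n : ℕ) (hm : 2 ≤ m) (hn : 2 ≤ n)
    (R : Set (ZMod m × ZMod n))
    (hR : R = {v | (v.1 = 0 ∨ v.1 = 1) ∧ (v.2 = 0 ∨ v.2 = 1)})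
    (H : (ZMod m × ZMod n) → (ZMod m × ZMod n) → Prop)
    (hEdge : ∀ u v, H u v → u ∉ R ∧ v ∉ R ∧ (v = u + (1, 0) ∨ v = u + (0, 1)))
    (hOut : ∀ u, u ∉ R → ∃! v, H u v)
    (hIn : ∀ v, v ∉ R → ∃! u, H u v) :
    ∀ v : ZMod m × ZMod n, ∃ k : ℤ, v + k • ((1 : ZMod m), (-1 : ZMod n)) ∈ R := by
  classical
  have : NeZero m := ⟨by omega⟩
  have : NeZero n := ⟨by omega⟩
  let π := QuotientAddGroup.mk' (AddSubgroup.zmultiples ((1 : ZMod m), (-1 : ZMod n)))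
  have hcover : IsCycleCover H Rᶜ :=
    ⟨fun h => ⟨(hEdge _ _ h).1, (hEdge _ _ h).2.1⟩, hOut, hIn⟩
  have hstep : ∀ u v, H u v → π v = π u + π (1, 0) := by
    intro u v huv
    rcases (hEdge u v huv).2.2 with rfl | rfl
    · exact map_add π u (1, 0)
    · exact (mk'_zmultiples_add_zero_one u).trans (map_add π u (1, 0))
  intro v
  obtain ⟨r, hr, hrv⟩ := hcover.exists_mem_fiber hstep (π.card_fiber_add (1, 0))
    (fun q => QuotientAddGroup.induction_on q fun x => ⟨_, mk'_zmultiples_eq_nsmul x⟩)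
    (show ((0, 0) : ZMod m × ZMod n) ∈ R by simp [hR]) (π v)
  obtain ⟨k, hk⟩ := AddSubgroup.mem_zmultiples_iff.1 (QuotientAddGroup.eq.1 hrv.symm)
  refine ⟨k, ?_⟩
  rwa [hk, add_neg_cancel_left]
end

section
/- The digraph (C⃗_m □ C⃗_n) ∖ R_{2,2} obtained from the Cartesian product of directed cycles of lengths m, n ≥ 2 by deleting the four vertices {0,1}×{0,1} has at most one vertex-disjoint cycle cover. -/
/-!
Write `g = gcd m n`.

If `g ≥ 3`, the diagonal class `v₁ + v₂ mod g` goes up by one along every edge, so a cycle cover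
maps the surviving vertices of class `0` injectively to those of class `1`. All classes of the
torus have the same size, while `R` removes one vertex of class `0` and two of class `1`:
there is no cycle cover at all.

If `g ≤ 2`, suppose two cycle covers `A`, `B` diverge at `u`, `A` stepping by `(1, 0)` and `B`
by `(0, 1)`. The `B`-edge into `u + (1, 0)` must come from `w = u + (1, -1)`, and then the
`A`-edge out of `w` cannot also enter `u + (1, 0)`, so `A`, `B` diverge at `w` in the same way
(and, by symmetry, at `u - (1, -1)`). The coset `u + ⟨(1, -1)⟩` contains a point `(c, 0)` with
`0 ≤ c < g`, which lies in `R`, contradicting that both covers avoid `R`.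
-/

/-- A cycle cover of the Cayley digraph of `G` with steps `e₁, e₂`, restricted to `Rᶜ`,
encoded by its edge relation. -/
structure IsCycleCover_s14 {G : Type*} [AddCommGroup G] (e₁ e₂ : G) (R : Set G)
    (H : G → G → Prop) : Prop where
  edge : ∀ u v, H u v → u ∉ R ∧ v ∉ R ∧ (v = u + e₁ ∨ v = u + e₂)
  existsUnique_out : ∀ u, u ∉ R → ∃! v, H u v
  existsUnique_in : ∀ v, v ∉ R → ∃! u, H u v

namespace IsCycleCover_s14

variable {G : Type*} [AddCommGroup G] {e₁ e₂ : G} {R : Set G} {A B H : G → G → Prop}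

lemma swap (hH : IsCycleCover_s14 e₁ e₂ R H) : IsCycleCover_s14 e₂ e₁ R H :=
  ⟨fun u v h => (hH.edge u v h).imp_right (.imp_right Or.symm), hH.existsUnique_out,
    hH.existsUnique_in⟩

lemma notMem_left (hH : IsCycleCover_s14 e₁ e₂ R H) {u v : G} (h : H u v) : u ∉ R :=
  (hH.edge u v h).1

lemma notMem_right (hH : IsCycleCover_s14 e₁ e₂ R H) {u v : G} (h : H u v) : v ∉ R :=
  (hH.edge u v h).2.1

lemma out_unique (hH : IsCycleCover_s14 e₁ e₂ R H) {u v₁ v₂ : G} (h₁ : H u v₁) (h₂ : H u v₂) :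
    v₁ = v₂ :=
  (hH.existsUnique_out u (hH.notMem_left h₁)).unique h₁ h₂

lemma in_unique (hH : IsCycleCover_s14 e₁ e₂ R H) {u₁ u₂ v : G} (h₁ : H u₁ v) (h₂ : H u₂ v) :
    u₁ = u₂ :=
  (hH.existsUnique_in v (hH.notMem_right h₁)).unique h₁ h₂

lemma diverge_add_sub (hA : IsCycleCover_s14 e₁ e₂ R A) (hB : IsCycleCover_s14 e₁ e₂ R B)
    (he : e₁ ≠ e₂) {u : G} (hAu : A u (u + e₁)) (hBu : B u (u + e₂)) :
    A (u + (e₁ - e₂)) (u + (e₁ - e₂) + e₁) ∧ B (u + (e₁ - e₂)) (u + (e₁ - e₂) + e₂) := by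
  have hw : u + (e₁ - e₂) + e₂ = u + e₁ := by abel
  have hwu : u + (e₁ - e₂) ≠ u := by simpa [sub_eq_zero] using he
  obtain ⟨x, hx, -⟩ := hB.existsUnique_in (u + e₁) (hA.notMem_right hAu)
  have hBw : B (u + (e₁ - e₂)) (u + (e₁ - e₂) + e₂) := by
    rcases (hB.edge _ _ hx).2.2 with h | h
    · obtain rfl : x = u := add_right_cancel h.symm
      exact absurd (add_left_cancel (hB.out_unique hx hBu)) he
    · rwa [hw, ← add_right_cancel (h.symm.trans hw.symm)]
  refine ⟨?_, hBw⟩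
  obtain ⟨y, hy, -⟩ := hA.existsUnique_out _ (hB.notMem_left hBw)
  rcases (hA.edge _ _ hy).2.2 with rfl | rfl
  · exact hy
  · rw [hw] at hy
    exact absurd (hA.in_unique hy hAu) hwu

lemma diverge_add_zsmul (hA : IsCycleCover_s14 e₁ e₂ R A) (hB : IsCycleCover_s14 e₁ e₂ R B)
    (he : e₁ ≠ e₂) {u : G} (hAu : A u (u + e₁)) (hBu : B u (u + e₂)) (k : ℤ) :
    A (u + k • (e₁ - e₂)) (u + k • (e₁ - e₂) + e₁) ∧
      B (u + k • (e₁ - e₂)) (u + k • (e₁ - e₂) + e₂) := by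
  induction k using Int.induction_on with
  | zero => simpa using ⟨hAu, hBu⟩
  | succ k ih =>
    rw [add_one_zsmul, ← add_assoc]
    exact diverge_add_sub hA hB he ih.1 ih.2
  | pred k ih =>
    have h := diverge_add_sub hB.swap hA.swap he.symm ih.2 ih.1
    have hpred : u + (-k - 1 : ℤ) • (e₁ - e₂) = u + -(k : ℤ) • (e₁ - e₂) + (e₂ - e₁) := by
      rw [sub_zsmul]; abel
    rwa [hpred, and_comm]

lemma eq_of_forall_exists_add_zsmul_mem (hA : IsCycleCover_s14 e₁ e₂ R A)
    (hB : IsCycleCover_s14 e₁ e₂ R B) (he : e₁ ≠ e₂)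
    (hR : ∀ u, ∃ k : ℤ, u + k • (e₁ - e₂) ∈ R) : A = B := by
  have not_diverge : ∀ {X Y : G → G → Prop}, IsCycleCover_s14 e₁ e₂ R X → IsCycleCover_s14 e₁ e₂ R Y →
      ∀ u, X u (u + e₁) → Y u (u + e₂) → False := fun hX hY u hXu hYu =>
    have ⟨k, hk⟩ := hR u
    hX.notMem_left (diverge_add_zsmul hX hY he hXu hYu k).1 hk
  have le : ∀ {X Y : G → G → Prop}, IsCycleCover_s14 e₁ e₂ R X → IsCycleCover_s14 e₁ e₂ R Y →
      ∀ u v, X u v → Y u v := by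
    intro X Y hX hY u v hXuv
    obtain ⟨w, hYuw, -⟩ := hY.existsUnique_out u (hX.notMem_left hXuv)
    rcases (hX.edge _ _ hXuv).2.2 with rfl | rfl <;> rcases (hY.edge _ _ hYuw).2.2 with rfl | rfl
    · exact hYuw
    · exact (not_diverge hX hY u hXuv hYuw).elim
    · exact (not_diverge hY hX u hYuw hXuv).elim
    · exact hYuw
  funext u v
  exact propext ⟨le hA hB u v, le hB hA u v⟩

lemma ncard_fiber_le_ncard_fiber_add_one [Finite G] {K : Type*} [AddMonoidWithOne K]
    (hH : IsCycleCover_s14 e₁ e₂ R H) (φ : G →+ K) (h₁ : φ e₁ = 1) (h₂ : φ e₂ = 1) (s : K) :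
    {v | v ∉ R ∧ φ v = s}.ncard ≤ {v | v ∉ R ∧ φ v = s + 1}.ncard := by
  choose! f hf using fun u (hu : u ∉ R) => (hH.existsUnique_out u hu).exists
  refine Set.ncard_le_ncard_of_injOn f (fun u ⟨hu, hφu⟩ => ⟨hH.notMem_right (hf u hu), ?_⟩)
    (fun u₁ hu₁ u₂ hu₂ h => hH.in_unique (hf u₁ hu₁.1) (h ▸ hf u₂ hu₂.1))
  rcases (hH.edge _ _ (hf u hu)).2.2 with h | h <;> simp [h, h₁, h₂, hφu]

end IsCycleCover_s14

lemma ZMod.natCast_ne_zero_of_pos_of_lt {a k : ℕ} (ha : 0 < a) (hk : a < k) :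
    (a : ZMod k) ≠ 0 := fun h =>
  ha.ne' (Nat.eq_zero_of_dvd_of_lt ((ZMod.natCast_eq_zero_iff a k).1 h) hk)

lemma ZMod.one_ne_zero_and_two_ne_zero {k : ℕ} (hk : 3 ≤ k) :
    (1 : ZMod k) ≠ 0 ∧ (2 : ZMod k) ≠ 0 :=
  ⟨by exact_mod_cast natCast_ne_zero_of_pos_of_lt (a := 1) one_pos (by omega),
    by exact_mod_cast natCast_ne_zero_of_pos_of_lt (a := 2) two_pos (by omega)⟩

def cornerSquare (m n : ℕ) : Set (ZMod m × ZMod n) :=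
  {v | (v.1 = 0 ∨ v.1 = 1) ∧ (v.2 = 0 ∨ v.2 = 1)}

def diagonalSum (m n : ℕ) : ZMod m × ZMod n →+ ZMod (Nat.gcd m n) :=
  (ZMod.castHom (Nat.gcd_dvd_left m n) _).toAddMonoidHom.coprod
    (ZMod.castHom (Nat.gcd_dvd_right m n) _).toAddMonoidHom

variable {m n : ℕ}

lemma diagonalSum_apply (v : ZMod m × ZMod n) :
    diagonalSum m n v =
      ZMod.castHom (Nat.gcd_dvd_left m n) _ v.1 + ZMod.castHom (Nat.gcd_dvd_right m n) _ v.2 :=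
  rfl

lemma exists_add_zsmul_eq_intCast (u : ZMod m × ZMod n) (hg : 0 < Nat.gcd m n) :
    ∃ k c : ℤ, 0 ≤ c ∧ c < Nat.gcd m n ∧ u + k • ((1, 0) - (0, 1)) = ((c : ZMod m), 0) := by
  obtain ⟨x, y⟩ := u
  obtain ⟨a, rfl⟩ := ZMod.intCast_surjective x
  obtain ⟨b, rfl⟩ := ZMod.intCast_surjective y
  have hbezout := Nat.gcd_eq_gcd_ab m n
  have hdiv := Int.emod_add_mul_ediv (a + b) (Nat.gcd m n)
  set q := (a + b) / (Nat.gcd m n : ℤ)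
  set c := (a + b) % (Nat.gcd m n : ℤ)
  refine ⟨b - n * Nat.gcdB m n * q, c, Int.emod_nonneg _ (by omega),
    Int.emod_lt_of_pos _ (by omega), ?_⟩
  have hfst : a + (b - n * Nat.gcdB m n * q) = c + m * (Nat.gcdA m n * q) := by
    linear_combination q * hbezout - hdiv
  rw [Prod.mk_sub_mk, sub_zero, zero_sub, Prod.smul_mk, Prod.mk_add_mk, zsmul_eq_mul,
    zsmul_eq_mul, mul_one, mul_neg_one, ← sub_eq_add_neg, ← Int.cast_add, hfst]
  simp

lemma ncard_fiber_one_lt_ncard_fiber_zero [NeZero m] [NeZero n] (hg : 3 ≤ Nat.gcd m n) :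
    {v | v ∉ cornerSquare m n ∧ diagonalSum m n v = 1}.ncard <
      {v | v ∉ cornerSquare m n ∧ diagonalSum m n v = 0}.ncard := by
  set T₀ := {v | v ∉ cornerSquare m n ∧ diagonalSum m n v = 0}
  obtain ⟨hg1, hg2⟩ := ZMod.one_ne_zero_and_two_ne_zero hg
  obtain ⟨hm1, hm2⟩ := ZMod.one_ne_zero_and_two_ne_zero
    (hg.trans (Nat.le_of_dvd (NeZero.pos m) (Nat.gcd_dvd_left m n)))
  have hcorner : ((-1 : ZMod m), (1 : ZMod n)) ∈ T₀ := by
    refine ⟨?_, by simp only [diagonalSum_apply, map_neg, map_one]; ring⟩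
    rintro ⟨h | h, -⟩
    · exact hm1 (by linear_combination -h)
    · exact hm2 (by linear_combination -h)
  calc _ ≤ (T₀ \ {(-1, 1)}).ncard :=
        Set.ncard_le_ncard_of_injOn (· - (1, 0)) ?_ sub_left_injective.injOn
    _ < T₀.ncard := Set.ncard_sdiff_singleton_lt_of_mem hcorner
  rintro v ⟨hvR, hv⟩
  refine ⟨⟨?_, by rw [map_sub, hv]; simp only [diagonalSum_apply, map_one, map_zero]; ring⟩, ?_⟩
  · rintro ⟨h1 | h1, h2⟩
    all_goals simp only [Prod.fst_sub, Prod.snd_sub, sub_zero] at h1 h2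
    · exact hvR ⟨Or.inr (by linear_combination h1), h2⟩
    · have hv1 : v.1 = 2 := by linear_combination h1
      simp only [diagonalSum_apply, hv1, map_ofNat] at hv
      rcases h2 with h2 | h2 <;> simp only [h2, map_zero, map_one, add_zero] at hv
      · exact hg1 (by linear_combination hv)
      · exact hg2 (by linear_combination hv)
  · intro h
    simp only [Set.mem_singleton_iff, Prod.ext_iff, Prod.fst_sub, Prod.snd_sub, sub_zero] at h
    exact hvR ⟨Or.inl (by linear_combination h.1), Or.inr h.2⟩

lemma exists_add_zsmul_mem_cornerSquare (hg : Nat.gcd m n ≤ 2) (hm : m ≠ 0)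
    (u : ZMod m × ZMod n) : ∃ k : ℤ, u + k • ((1, 0) - (0, 1)) ∈ cornerSquare m n := by
  obtain ⟨k, c, hc0, hcg, hk⟩ := exists_add_zsmul_eq_intCast u (Nat.gcd_pos_of_pos_left n
    (Nat.pos_of_ne_zero hm))
  refine ⟨k, hk ▸ ?_⟩
  obtain rfl | rfl : c = 0 ∨ c = 1 := by omega
  all_goals simp [cornerSquare]

lemma not_isCycleCover_of_three_le_gcd [NeZero m] [NeZero n] (hg : 3 ≤ Nat.gcd m n)
    {H : ZMod m × ZMod n → ZMod m × ZMod n → Prop} :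
    ¬IsCycleCover_s14 ((1 : ZMod m), (0 : ZMod n)) (0, 1) (cornerSquare m n) H := fun hH =>
  (hH.ncard_fiber_le_ncard_fiber_add_one (diagonalSum m n)
    (by simp only [diagonalSum_apply, map_one, map_zero, add_zero])
    (by simp only [diagonalSum_apply, map_one, map_zero, zero_add]) 0).not_gt
    (by simpa only [zero_add] using ncard_fiber_one_lt_ncard_fiber_zero hg)

/-- The digraph `(C⃗_m □ C⃗_n) ∖ R_{2,2}` (with `m, n ≥ 2`) has at most one
vertex-disjoint cycle cover: any two spanning subdigraphs in which every vertex
has in-degree 1 and out-degree 1 are equal. -/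
theorem stmt_14 (m n : ℕ) (hm : 2 ≤ m) (hn : 2 ≤ n)
    (R : Set (ZMod m × ZMod n))
    (hR : R = {v | (v.1 = 0 ∨ v.1 = 1) ∧ (v.2 = 0 ∨ v.2 = 1)})
    (H₁ H₂ : (ZMod m × ZMod n) → (ZMod m × ZMod n) → Prop)
    (hEdge₁ : ∀ u v, H₁ u v → u ∉ R ∧ v ∉ R ∧ (v = u + (1, 0) ∨ v = u + (0, 1)))
    (hOut₁ : ∀ u, u ∉ R → ∃! v, H₁ u v)
    (hIn₁ : ∀ v, v ∉ R → ∃! u, H₁ u v)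
    (hEdge₂ : ∀ u v, H₂ u v → u ∉ R ∧ v ∉ R ∧ (v = u + (1, 0) ∨ v = u + (0, 1)))
    (hOut₂ : ∀ u, u ∉ R → ∃! v, H₂ u v)
    (hIn₂ : ∀ v, v ∉ R → ∃! u, H₂ u v) :
    H₁ = H₂ := by
  subst hR
  have h₁ : IsCycleCover_s14 ((1 : ZMod m), (0 : ZMod n)) (0, 1) (cornerSquare m n) H₁ :=
    ⟨hEdge₁, hOut₁, hIn₁⟩
  have h₂ : IsCycleCover_s14 ((1 : ZMod m), (0 : ZMod n)) (0, 1) (cornerSquare m n) H₂ :=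
    ⟨hEdge₂, hOut₂, hIn₂⟩
  rcases le_or_gt (Nat.gcd m n) 2 with hg | hg
  · have : Fact (1 < m) := ⟨hm⟩
    exact h₁.eq_of_forall_exists_add_zsmul_mem h₂ (by simp)
      (exists_add_zsmul_mem_cornerSquare hg (by omega))
  · have : NeZero m := ⟨by omega⟩
    have : NeZero n := ⟨by omega⟩
    exact absurd h₁ (not_isCycleCover_of_three_le_gcd hg)
end

section
/- Let m, n ≥ 3 and let H be a vertex-disjoint cycle cover of the digraph (C⃗_m □ C⃗_n) ∖ R_{2,2}. If a vertex v travels by (1,0) (i.e., H contains the edge v → v+(1,0)) and v+(1,-1) ∉ R_{2,2}, then v+(1,-1) also travels by (1,0). -/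
/-!
The out-edge of `w = v + (1,-1)` goes either to `w + (1,0)` or to `w + (0,1) = v + (1,0)`.
In the second case `v + (1,0)` has the two in-neighbours `v` and `w`, which differ because
`1 ≠ 0` in `ZMod m` for `m ≥ 2`.
-/

theorem Prod.add_one_neg_one_add_zero_one {α β : Type*} [AddGroupWithOne α] [AddGroupWithOne β]
    (v : α × β) : v + (1, -1) + (0, 1) = v + (1, 0) := by
  rw [add_assoc]
  congr 1
  ext <;> simp

theorem stmt_15_general (m n : ℕ) (hm : 3 ≤ m)
    (R : Set (ZMod m × ZMod n))
    (H : (ZMod m × ZMod n) → (ZMod m × ZMod n) → Prop)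
    (hEdge : ∀ u v, H u v → u ∉ R ∧ v ∉ R ∧ (v = u + (1, 0) ∨ v = u + (0, 1)))
    (hOut : ∀ u, u ∉ R → ∃! v, H u v)
    (hIn : ∀ v, v ∉ R → ∃! u, H u v)
    (v : ZMod m × ZMod n)
    (hv : H v (v + (1, 0)))
    (hnot : v + (1, -1) ∉ R) :
    H (v + (1, -1)) (v + (1, -1) + (1, 0)) := by
  obtain ⟨u, hu, -⟩ := hOut _ hnot
  rcases (hEdge _ _ hu).2.2 with rfl | rfl
  · exact hu
  · rw [Prod.add_one_neg_one_add_zero_one] at hu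
    have hsame : v + (1, -1) = v := (hIn _ (hEdge _ _ hv).2.1).unique hu hv
    have hone : (1 : ZMod m) = 0 := by simpa using congrArg Prod.fst hsame
    have : Fact (1 < m) := ⟨by omega⟩
    exact absurd hone one_ne_zero

/-- Let `H` be a vertex-disjoint cycle cover of `(C⃗_m □ C⃗_n) ∖ R_{2,2}`
(`m, n ≥ 3`). If `v` travels by `(1,0)` and `v + (1,-1) ∉ R_{2,2}`, then
`v + (1,-1)` also travels by `(1,0)`. -/
theorem stmt_15 (m n : ℕ) (hm : 3 ≤ m) (hn : 3 ≤ n)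
    (R : Set (ZMod m × ZMod n))
    (hR : R = {v | (v.1 = 0 ∨ v.1 = 1) ∧ (v.2 = 0 ∨ v.2 = 1)})
    (H : (ZMod m × ZMod n) → (ZMod m × ZMod n) → Prop)
    (hEdge : ∀ u v, H u v → u ∉ R ∧ v ∉ R ∧ (v = u + (1, 0) ∨ v = u + (0, 1)))
    (hOut : ∀ u, u ∉ R → ∃! v, H u v)
    (hIn : ∀ v, v ∉ R → ∃! u, H u v)
    (v : ZMod m × ZMod n)
    (hv : H v (v + (1, 0)))
    (hnot : v + (1, -1) ∉ R) :
    H (v + (1, -1)) (v + (1, -1) + (1, 0)) :=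
  stmt_15_general m n hm R H hEdge hOut hIn v hv hnot
end

section
/- Let m, n ≥ 3 and let H be a vertex-disjoint cycle cover of (C⃗_m □ C⃗_n) ∖ R_{2,2}. If a vertex v travels by (1,0), and neither v-(1,-1) nor v+(0,1) lies in R_{2,2}, then v-(1,-1) also travels by (1,0). -/
/-!
The vertex `v + (0,1)` has an in-neighbour `u`, reached either by `(1,0)` or by `(0,1)`.
In the second case `u = v`, which would leave `v` along two different edges; so `u + (1,0) = v + (0,1)`,
i.e. `u = v - (1,-1)`.
-/

theorem eq_add_sub_of_step_or_step {α : Type*} [AddGroup α] {H : α → α → Prop} {s t : α}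
    (hst : s ≠ t) (hstep : ∀ u w, H u w → w = u + s ∨ w = u + t) {v u : α}
    (hv : ∀ w, H v w → w = v + s) (hu : H u (v + t)) : u = v + t - s := by
  rcases hstep u _ hu with h | h
  · exact eq_sub_of_add_eq h.symm
  · obtain rfl : u = v := (add_right_cancel h).symm
    exact absurd (add_left_cancel (hv _ hu).symm) hst

theorem stmt_16_general (m n : ℕ) (hm : 3 ≤ m)
    (R : Set (ZMod m × ZMod n))
    (H : (ZMod m × ZMod n) → (ZMod m × ZMod n) → Prop)
    (hEdge : ∀ u v, H u v → u ∉ R ∧ v ∉ R ∧ (v = u + (1, 0) ∨ v = u + (0, 1)))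
    (hOut : ∀ u, u ∉ R → ∃! v, H u v)
    (hIn : ∀ v, v ∉ R → ∃! u, H u v)
    (v : ZMod m × ZMod n)
    (hv : H v (v + (1, 0)))
    (h2 : v + (0, 1) ∉ R) :
    H (v - (1, -1)) (v - (1, -1) + (1, 0)) := by
  have : Fact (1 < m) := ⟨by omega⟩
  have hst : ((1, 0) : ZMod m × ZMod n) ≠ (0, 1) := fun h => one_ne_zero (congrArg Prod.fst h)
  have hvOut : ∀ w, H v w → w = v + (1, 0) := fun w hw =>
    (hOut v (hEdge v _ hv).1).unique hw hv
  obtain ⟨u, hu, -⟩ := hIn (v + (0, 1)) h2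
  have hshift : v - (1, -1) = v + (0, 1) - (1, 0) := by
    ext <;> simp
  have hu_eq := eq_add_sub_of_step_or_step hst (fun u w h => (hEdge u w h).2.2) hvOut hu
  rwa [hshift, sub_add_cancel, ← hu_eq]

/-- Let `H` be a vertex-disjoint cycle cover of `(C⃗_m □ C⃗_n) ∖ R_{2,2}`
(`m, n ≥ 3`). If `v` travels by `(1,0)`, and neither `v - (1,-1)` nor
`v + (0,1)` lies in `R_{2,2}`, then `v - (1,-1)` also travels by `(1,0)`. -/
theorem stmt_16 (m n : ℕ) (hm : 3 ≤ m) (hn : 3 ≤ n)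
    (R : Set (ZMod m × ZMod n))
    (hR : R = {v | (v.1 = 0 ∨ v.1 = 1) ∧ (v.2 = 0 ∨ v.2 = 1)})
    (H : (ZMod m × ZMod n) → (ZMod m × ZMod n) → Prop)
    (hEdge : ∀ u v, H u v → u ∉ R ∧ v ∉ R ∧ (v = u + (1, 0) ∨ v = u + (0, 1)))
    (hOut : ∀ u, u ∉ R → ∃! v, H u v)
    (hIn : ∀ v, v ∉ R → ∃! u, H u v)
    (v : ZMod m × ZMod n)
    (hv : H v (v + (1, 0)))
    (h1 : v - (1, -1) ∉ R)
    (h2 : v + (0, 1) ∉ R) :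
    H (v - (1, -1)) (v - (1, -1) + (1, 0)) :=
  stmt_16_general m n hm R H hEdge hOut hIn v hv h2
end

section
/- For m, n ≥ 3 with gcd(m,n) = 1, the digraph C⃗_m □ C⃗_n (Cartesian product of directed cycles) is not hamiltonian. -/
/-!
Summing the steps `f (i + 1) - f i` around a hamiltonian cycle gives `0`. If `x` steps are
`(1, 0)` and `y = mn - x` are `(0, 1)`, this says `m ∣ x` and `n ∣ y`, hence also `n ∣ x`; by
coprimality `mn ∣ x`, so all steps are equal. A cycle with a single step direction keeps one
coordinate constant and cannot visit all of `ℤ/m × ℤ/n`.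
-/

open Finset

/-- Edge relation of the Cartesian product `C⃗_m □ C⃗_n` on `ZMod m × ZMod n`. -/
def cpEdge (m n : ℕ) (u v : ZMod m × ZMod n) : Prop :=
  v = u + (1, 0) ∨ v = u + (0, 1)

/-- `E` has a hamiltonian cycle on the vertex set `S`, of length `N`. -/
def HamOn {V : Type} (E : V → V → Prop) (S : Set V) (N : ℕ) : Prop :=
  ∃ f : ZMod N → V, Function.Injective f ∧ Set.range f = S ∧ ∀ i, E (f i) (f (i + 1))

section Steps

variable {G V : Type*} [AddGroup G] [Fintype G] [AddCommGroup V]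

theorem Fintype.sum_sub_comp_add_right_eq_zero (f : G → V) (c : G) :
    ∑ i, (f (i + c) - f i) = 0 := by
  rw [Finset.sum_sub_distrib, sub_eq_zero]
  exact Equiv.sum_comp (Equiv.addRight c) f

theorem card_smul_add_card_smul_eq_zero [DecidableEq V] (f : G → V) (c : G) (a b : V)
    (h : ∀ i, f (i + c) = f i + a ∨ f (i + c) = f i + b) :
    #{i | f (i + c) = f i + a} • a + #{i | f (i + c) ≠ f i + a} • b = 0 := by
  rw [← Fintype.sum_sub_comp_add_right_eq_zero f c,
    ← Finset.sum_filter_add_sum_filter_not univ (fun i => f (i + c) = f i + a)]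
  congr 1 <;> rw [← Finset.sum_const] <;> refine Finset.sum_congr rfl fun i hi => ?_ <;>
    rw [Finset.mem_filter] at hi
  · rw [hi.2, add_sub_cancel_left]
  · rw [(h i).resolve_left hi.2, add_sub_cancel_left]

end Steps

theorem ZMod.apply_eq_apply_zero_of_periodic_one {N : ℕ} [NeZero N] {α : Type*}
    (g : ZMod N → α) (h : Function.Periodic g 1) (i : ZMod N) : g i = g 0 := by
  obtain ⟨k, rfl⟩ := ZMod.natCast_zmod_surjective i
  induction k with
  | zero => rw [Nat.cast_zero]
  | succ k ih => rw [Nat.cast_succ, h, ih]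

theorem ZMod.range_ne_univ_of_forall_add_eq {N : ℕ} [NeZero N] {V W : Type*}
    [AddCommGroup V] [AddCommGroup W] [Nontrivial W] (f : ZMod N → V) (d : V) (φ : V →+ W)
    (hφ : Function.Surjective φ) (hd : φ d = 0) (h : ∀ i, f (i + 1) = f i + d) :
    Set.range f ≠ Set.univ := by
  intro hrange
  have hconst : ∀ i, φ (f i) = φ (f 0) :=
    ZMod.apply_eq_apply_zero_of_periodic_one (φ ∘ f) fun i => by
      simp only [Function.comp_apply, h, map_add, hd, add_zero]
  obtain ⟨w, hw⟩ := exists_ne (φ (f 0))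
  obtain ⟨v, rfl⟩ := hφ w
  obtain ⟨i, rfl⟩ : v ∈ Set.range f := hrange ▸ Set.mem_univ v
  exact hw (hconst i)

theorem Nat.eq_zero_or_eq_zero_of_add_eq_mul {m n x y : ℕ} (hmn : m.Coprime n)
    (hx : m ∣ x) (hy : n ∣ y) (hxy : x + y = m * n) : x = 0 ∨ y = 0 := by
  have hnx : n ∣ x := (Nat.dvd_add_left hy).mp (hxy ▸ dvd_mul_left n m)
  rcases Nat.eq_zero_or_pos x with hx0 | hxpos
  · exact .inl hx0
  · have := Nat.le_of_dvd hxpos (hmn.mul_dvd_of_dvd_of_dvd hx hnx)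
    exact .inr (by omega)

/-- For `m, n ≥ 3` with `gcd(m,n) = 1`, the digraph `C⃗_m □ C⃗_n` is not
hamiltonian. -/
theorem stmt_19 (m n : ℕ) (hm : 3 ≤ m) (hn : 3 ≤ n) (hg : Nat.gcd m n = 1) :
    ¬ HamOn (cpEdge m n) Set.univ (m * n) := by
  rintro ⟨f, -, hrange, hstep⟩
  have : NeZero (m * n) := ⟨by positivity⟩
  have : Fact (1 < m) := ⟨by omega⟩
  have : Fact (1 < n) := ⟨by omega⟩
  set x := #{i | f (i + 1) = f i + (1, 0)}
  set y := #{i | f (i + 1) ≠ f i + (1, 0)}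
  have hsum := card_smul_add_card_smul_eq_zero f 1 (1, 0) (0, 1) hstep
  simp only [Prod.smul_mk, nsmul_eq_mul, mul_one, mul_zero, Prod.mk_add_mk, add_zero, zero_add,
    Prod.mk_eq_zero] at hsum
  have hxy : x + y = m * n := by
    rw [card_filter_add_card_filter_not, card_univ, ZMod.card]
  rcases Nat.eq_zero_or_eq_zero_of_add_eq_mul hg ((ZMod.natCast_eq_zero_iff x m).mp hsum.1)
    ((ZMod.natCast_eq_zero_iff y n).mp hsum.2) hxy with hx | hy
  · refine ZMod.range_ne_univ_of_forall_add_eq f (0, 1) (AddMonoidHom.fst _ _)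
      Prod.fst_surjective rfl (fun i => (hstep i).resolve_left ?_) hrange
    exact filter_eq_empty_iff.mp (card_eq_zero.mp hx) (mem_univ i)
  · refine ZMod.range_ne_univ_of_forall_add_eq f (1, 0) (AddMonoidHom.snd _ _)
      Prod.snd_surjective rfl (fun i => ?_) hrange
    exact not_not.mp (filter_eq_empty_iff.mp (card_eq_zero.mp hy) (mem_univ i))
end
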